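/- arXiv:1909.00286 — 4 statements merged into one kernel-verified Lean document; each statement's English description precedes it below -/
import Mathlib

section
/- In any labelled transition system with concurrency, if for every state only countably many non-blocking transitions (transitions in Tr•_{¬B}) have that state as their source, then B-justness is feasible: every finite path can be extended into a B-just path. -/
/-- A labelled transition system with distinguished sets `Rec ⊆ Act` of labels. -/
structure LTS (S Tr L : Type) where
  source : Tr → S
  target : Tr → S
  label : Tr → L
  Act : Set L
  Rec : Set L
  rec_sub : Rec ⊆ Act

/-- `Tr•`: the transitions whose label is in `Act ∖ Rec`. -/
def LTS.TrB {S Tr L : Type} (lts : LTS S Tr L) : Set Tr :=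
  {t | lts.label t ∈ lts.Act ∧ lts.label t ∉ lts.Rec}

/-- A path: an alternating sequence of states and transitions, with matching sources and
targets and labels in `Act`, either infinite (`len = ⊤`) or ending in a state (`len = n`).
`states i` and `trans i` are meaningful for `i ≤ len`, resp. `i < len`. -/
structure LTS.Path {S Tr L : Type} (lts : LTS S Tr L) where
  len : ℕ∞
  states : ℕ → S
  trans : ℕ → Tr
  src_eq : ∀ i : ℕ, (i : ℕ∞) < len → lts.source (trans i) = states i
  tgt_eq : ∀ i : ℕ, (i : ℕ∞) < len → lts.target (trans i) = states (i + 1)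
  lab_act : ∀ i : ℕ, (i : ℕ∞) < len → lts.label (trans i) ∈ lts.Act

/-- A labelled transition system with concurrency: a relation `⌣•` on `Tr• × Tr`
satisfying irreflexivity (on `Tr•`) and the closure property (2). -/
structure LTSC (S Tr L : Type) extends LTS S Tr L where
  conc : Tr → Tr → Prop
  conc_irrefl : ∀ t ∈ toLTS.TrB, ¬ conc t t
  conc_closure : ∀ t ∈ toLTS.TrB, ∀ π : toLTS.Path, ∀ n : ℕ,
    π.len = (n : ℕ∞) → π.states 0 = toLTS.source t →
    (∀ i : ℕ, i < n → conc t (π.trans i)) →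
    ∃ u ∈ toLTS.TrB, toLTS.source u = π.states n ∧
      toLTS.label u = toLTS.label t ∧ ¬ conc t u

/-- A path is `B`-just if for each suffix (starting at position `k`) and each transition
`t ∈ Tr•` with `ℓ(t) ∉ B` enabled in the first state of that suffix, a transition `u`
with `¬ t ⌣• u` occurs in the suffix. -/
def LTSC.BJust {S Tr L : Type} (lts : LTSC S Tr L) (B : Set L)
    (π : lts.toLTS.Path) : Prop :=
  ∀ k : ℕ, (k : ℕ∞) ≤ π.len →
    ∀ t ∈ lts.toLTS.TrB, lts.label t ∉ B → lts.source t = π.states k →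
      ∃ i : ℕ, k ≤ i ∧ (i : ℕ∞) < π.len ∧ ¬ lts.conc t (π.trans i)

/-- `ρ` extends `π`: they agree on the (finite) part `π` and `ρ` is at least as long. -/
def LTS.Path.Extends {S Tr L : Type} {lts : LTS S Tr L} (ρ π : lts.Path) : Prop :=
  π.len ≤ ρ.len ∧ (∀ i : ℕ, (i : ℕ∞) ≤ π.len → ρ.states i = π.states i) ∧
  (∀ i : ℕ, (i : ℕ∞) < π.len → ρ.trans i = π.trans i)

/-!
The path is extended one transition at a time. The transitions of `Tr•_{¬B}` enabled at each
state are enumerated, and step `m = ⟨k, j⟩` attends to the `j`-th transition `t` enabled at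
position `k`: if everything taken since position `k` is concurrent with `t`, property (2) provides
an enabled transition not concurrent with `t`, which is taken next; otherwise any enabled
transition of `Tr•_{¬B}` is taken. If the construction gets stuck, no transition of `Tr•_{¬B}` is
enabled at the end, and the finite path built so far is `B`-just by (2) again. Otherwise the
limit is an infinite path on which every obligation has been discharged.
-/

variable {S Tr L : Type}

def LTS.enabled (lts : LTS S Tr L) (B : Set L) (s : S) : Set Tr :=
  {t | t ∈ lts.TrB ∧ lts.label t ∉ B ∧ lts.source t = s}

namespace LTS.Path

variable {lts : LTS S Tr L}

theorem Extends.refl (ρ : lts.Path) : ρ.Extends ρ :=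
  ⟨le_rfl, fun _ _ => rfl, fun _ _ => rfl⟩

theorem Extends.trans {ρ₁ ρ₂ ρ₃ : lts.Path} (h₃ : ρ₃.Extends ρ₂) (h₂ : ρ₂.Extends ρ₁) :
    ρ₃.Extends ρ₁ :=
  ⟨h₂.1.trans h₃.1,
    fun i hi => (h₃.2.1 i (hi.trans h₂.1)).trans (h₂.2.1 i hi),
    fun i hi => (h₃.2.2 i (hi.trans_le h₂.1)).trans (h₂.2.2 i hi)⟩

theorem extends_of_le {ρ : ℕ → lts.Path} (hext : ∀ m, (ρ (m + 1)).Extends (ρ m)) {m m' : ℕ}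
    (hm : m ≤ m') : (ρ m').Extends (ρ m) := by
  induction m', hm using Nat.le_induction with
  | base => exact Extends.refl _
  | succ m' _ ih => exact (hext m').trans ih

def snoc (ρ : lts.Path) {N : ℕ} (hN : ρ.len = N) (u : Tr) (hu : lts.source u = ρ.states N)
    (hl : lts.label u ∈ lts.Act) : lts.Path where
  len := (N + 1 : ℕ)
  states := Function.update ρ.states (N + 1) (lts.target u)
  trans := Function.update ρ.trans N u
  src_eq i hi := by
    obtain hi | rfl := Nat.lt_succ_iff_lt_or_eq.mp (by exact_mod_cast hi)
    · rw [Function.update_of_ne hi.ne, Function.update_of_ne (by omega)]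
      exact ρ.src_eq i (by rw [hN]; exact_mod_cast hi)
    · rwa [Function.update_self, Function.update_of_ne (by omega)]
  tgt_eq i hi := by
    obtain hi | rfl := Nat.lt_succ_iff_lt_or_eq.mp (by exact_mod_cast hi)
    · rw [Function.update_of_ne hi.ne, Function.update_of_ne (by omega)]
      exact ρ.tgt_eq i (by rw [hN]; exact_mod_cast hi)
    · rw [Function.update_self, Function.update_self]
  lab_act i hi := by
    obtain hi | rfl := Nat.lt_succ_iff_lt_or_eq.mp (by exact_mod_cast hi)
    · rw [Function.update_of_ne hi.ne]
      exact ρ.lab_act i (by rw [hN]; exact_mod_cast hi)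
    · rwa [Function.update_self]

theorem snoc_extends (ρ : lts.Path) {N : ℕ} (hN : ρ.len = N) (u : Tr)
    (hu : lts.source u = ρ.states N) (hl : lts.label u ∈ lts.Act) :
    (ρ.snoc hN u hu hl).Extends ρ := by
  refine ⟨by rw [hN]; exact Nat.cast_le.2 N.le_succ, fun i hi => ?_, fun i hi => ?_⟩
  · have : i ≤ N := by rw [hN] at hi; exact_mod_cast hi
    exact Function.update_of_ne (by omega) _ _
  · have : i < N := by rw [hN] at hi; exact_mod_cast hi
    exact Function.update_of_ne (by omega) _ _

def slice (ρ : lts.Path) (k N : ℕ) (hN : (N : ℕ∞) ≤ ρ.len) : lts.Path where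
  len := (N - k : ℕ)
  states i := ρ.states (k + i)
  trans i := ρ.trans (k + i)
  src_eq i hi := ρ.src_eq (k + i) <| lt_of_lt_of_le (by norm_cast at hi ⊢; omega) hN
  tgt_eq i hi := ρ.tgt_eq (k + i) <| lt_of_lt_of_le (by norm_cast at hi ⊢; omega) hN
  lab_act i hi := ρ.lab_act (k + i) <| lt_of_lt_of_le (by norm_cast at hi ⊢; omega) hN

def limit (ρ : ℕ → lts.Path) (hext : ∀ m, (ρ (m + 1)).Extends (ρ m))
    (hlen : ∀ m : ℕ, (m : ℕ∞) ≤ (ρ m).len) : lts.Path where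
  len := ⊤
  states i := (ρ i).states i
  trans i := (ρ (i + 1)).trans i
  src_eq i _ := by
    rw [(ρ (i + 1)).src_eq i ((Nat.cast_lt.2 i.lt_succ_self).trans_le (hlen _))]
    exact (hext i).2.1 i (hlen i)
  tgt_eq i _ := (ρ (i + 1)).tgt_eq i ((Nat.cast_lt.2 i.lt_succ_self).trans_le (hlen _))
  lab_act i _ := (ρ (i + 1)).lab_act i ((Nat.cast_lt.2 i.lt_succ_self).trans_le (hlen _))

theorem limit_extends (ρ : ℕ → lts.Path) (hext : ∀ m, (ρ (m + 1)).Extends (ρ m))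
    (hlen : ∀ m : ℕ, (m : ℕ∞) ≤ (ρ m).len) (m : ℕ) : (limit ρ hext hlen).Extends (ρ m) := by
  refine ⟨le_top, fun i hi => ?_, fun i hi => ?_⟩
  · obtain him | hmi := le_total i m
    · exact ((extends_of_le hext him).2.1 i (hlen i)).symm
    · exact (extends_of_le hext hmi).2.1 i hi
  · obtain him | hmi := le_total (i + 1) m
    · exact ((extends_of_le hext him).2.2 i ((Nat.cast_lt.2 i.lt_succ_self).trans_le (hlen _))).symm
    · exact (extends_of_le hext hmi).2.2 i hi

end LTS.Path

namespace LTSC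

variable (lts : LTSC S Tr L) (B : Set L)

theorem exists_not_conc_of_forall_conc (ρ : lts.Path) {k N : ℕ} (hkN : k ≤ N)
    (hN : (N : ℕ∞) ≤ ρ.len) {t : Tr} (ht : t ∈ lts.TrB) (hsrc : lts.source t = ρ.states k)
    (hconc : ∀ i, k ≤ i → i < N → lts.conc t (ρ.trans i)) :
    ∃ u ∈ lts.TrB, lts.source u = ρ.states N ∧ lts.label u = lts.label t ∧ ¬ lts.conc t u := by
  have := lts.conc_closure t ht (ρ.slice k N hN) (N - k) rfl hsrc.symm
    fun i hi => hconc (k + i) (by omega) (by omega)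
  simpa only [LTS.Path.slice, Nat.add_sub_cancel' hkN] using this

theorem bJust_of_enabled_eq_empty {ρ : lts.Path} {N : ℕ} (hN : ρ.len = N)
    (h : lts.enabled B (ρ.states N) = ∅) : lts.BJust B ρ := by
  intro k hk t ht htB hsrc
  by_contra! hconc
  have hkN : k ≤ N := by rw [hN] at hk; exact_mod_cast hk
  obtain ⟨u, hu, hsrcu, hlab, -⟩ := lts.exists_not_conc_of_forall_conc ρ hkN hN.ge ht hsrc
    fun i hki hiN => hconc i hki (by rw [hN]; exact_mod_cast hiN)
  exact h.subset ⟨hu, hlab ▸ htB, hsrcu⟩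

variable (e : S → ℕ → Option Tr)

/-- Taking `u` at position `N` of `ρ` discharges the obligation for the `j`-th transition (in the
enumeration `e`) enabled at position `k`. -/
def ObligationMet (ρ : lts.Path) (N k j : ℕ) (u : Tr) : Prop :=
  ∀ t ∈ e (ρ.states k) j, t ∈ lts.enabled B (ρ.states k) →
    (∀ i, k ≤ i → i < N → lts.conc t (ρ.trans i)) → ¬ lts.conc t u

theorem exists_obligationMet {ρ : lts.Path} {N k : ℕ} (hN : ρ.len = N) (hk : k ≤ N) (j : ℕ)
    (hne : (lts.enabled B (ρ.states N)).Nonempty) :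
    ∃ u ∈ lts.enabled B (ρ.states N), lts.ObligationMet B e ρ N k j u := by
  by_cases hpending : ∃ t ∈ e (ρ.states k) j, t ∈ lts.enabled B (ρ.states k) ∧
      ∀ i, k ≤ i → i < N → lts.conc t (ρ.trans i)
  · obtain ⟨t, hte, ⟨htB, htnB, hsrc⟩, hconc⟩ := hpending
    obtain ⟨u, hu, hsrcu, hlab, hnc⟩ :=
      lts.exists_not_conc_of_forall_conc ρ hk hN.ge htB hsrc hconc
    refine ⟨u, ⟨hu, hlab ▸ htnB, hsrcu⟩, fun t' ht' _ _ => ?_⟩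
    rwa [Option.mem_unique ht' hte]
  · obtain ⟨u, hu⟩ := hne
    exact ⟨u, hu, fun t hte hten hconc => (hpending ⟨t, hte, hten, hconc⟩).elim⟩

open Classical in
noncomputable def extendStep (ρ : lts.Path) (N k j : ℕ) : lts.Path :=
  if h : ρ.len = N ∧ k ≤ N ∧ (lts.enabled B (ρ.states N)).Nonempty then
    have hu := (lts.exists_obligationMet B e h.1 h.2.1 j h.2.2).choose_spec
    ρ.snoc h.1 _ hu.1.2.2 hu.1.1.1
  else ρ

theorem extendStep_extends (ρ : lts.Path) (N k j : ℕ) :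
    (lts.extendStep B e ρ N k j).Extends ρ := by
  unfold extendStep
  split_ifs
  · exact LTS.Path.snoc_extends ..
  · exact LTS.Path.Extends.refl ρ

theorem extendStep_spec {ρ : lts.Path} {N k : ℕ} (hN : ρ.len = N) (hk : k ≤ N) (j : ℕ)
    (hne : (lts.enabled B (ρ.states N)).Nonempty) :
    (lts.extendStep B e ρ N k j).len = (N + 1 : ℕ) ∧
      lts.ObligationMet B e ρ N k j ((lts.extendStep B e ρ N k j).trans N) := by
  have h : ρ.len = N ∧ k ≤ N ∧ (lts.enabled B (ρ.states N)).Nonempty := ⟨hN, hk, hne⟩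
  rw [extendStep, dif_pos h]
  refine ⟨rfl, ?_⟩
  simp only [LTS.Path.snoc, Function.update_self]
  exact (lts.exists_obligationMet B e h.1 h.2.1 j h.2.2).choose_spec.2

/-- The obligations `(k, j)` are scheduled along `Nat.unpair`; since `k ≤ Nat.pair k j`, the
obligation `(k, j)` is handled at a step where position `k` has already been reached. -/
noncomputable def justRun (π : lts.Path) (n : ℕ) : ℕ → lts.Path
  | 0 => π
  | m + 1 => lts.extendStep B e (justRun π n m) (n + m) m.unpair.1 m.unpair.2

variable {π : lts.Path} {n : ℕ}

theorem justRun_extends_succ (m : ℕ) :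
    (lts.justRun B e π n (m + 1)).Extends (lts.justRun B e π n m) :=
  lts.extendStep_extends B e _ _ _ _

theorem justRun_len (hπ : π.len = n) {m : ℕ}
    (hne : ∀ m' < m, (lts.enabled B ((lts.justRun B e π n m').states (n + m'))).Nonempty) :
    (lts.justRun B e π n m).len = (n + m : ℕ) := by
  induction m with
  | zero => exact hπ
  | succ m ih =>
    exact (lts.extendStep_spec B e (ih fun m' hm' => hne m' (by omega))
      ((Nat.unpair_left_le m).trans (Nat.le_add_left m n)) _ (hne m m.lt_succ_self)).1

theorem bJust_of_forall_extends_justRun (hπ : π.len = n)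
    (hne : ∀ m, (lts.enabled B ((lts.justRun B e π n m).states (n + m))).Nonempty)
    (he : ∀ s, some '' lts.enabled B s ⊆ Set.range (e s))
    {ρ : lts.Path} (hρ : ∀ m, ρ.Extends (lts.justRun B e π n m)) : lts.BJust B ρ := by
  intro k _ t htB htnB hsrc
  obtain ⟨j, hj⟩ := he _ ⟨t, ⟨htB, htnB, hsrc⟩, rfl⟩
  by_contra! hconc
  set m := Nat.pair k j
  have hkm : k ≤ n + m := (Nat.left_le_pair k j).trans (Nat.le_add_left m n)
  have hlen (l : ℕ) : (lts.justRun B e π n l).len = (n + l : ℕ) :=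
    lts.justRun_len B e hπ fun m' _ => hne m'
  have hmet := (lts.extendStep_spec B e (hlen m) hkm j (hne m)).2
  have hstates : (lts.justRun B e π n m).states k = ρ.states k :=
    ((hρ m).2.1 k (by rw [hlen m]; exact_mod_cast hkm)).symm
  have hρlen (i : ℕ) (hi : i < n + m + 1) : (i : ℕ∞) < ρ.len :=
    lt_of_lt_of_le (by rw [hlen (m + 1)]; exact_mod_cast hi) (hρ (m + 1)).1
  refine hmet t (by rw [hstates]; exact hj) (by rw [hstates]; exact ⟨htB, htnB, hsrc⟩)
    (fun i hki hi => ?_) ?_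
  · rw [← (hρ m).2.2 i (by rw [hlen m]; exact_mod_cast hi)]
    exact hconc i hki (hρlen i (by omega))
  · have htrans : ρ.trans (n + m) = (lts.justRun B e π n (m + 1)).trans (n + m) :=
      (hρ (m + 1)).2.2 _ (by rw [hlen (m + 1)]; exact_mod_cast (n + m).lt_succ_self)
    simp only [justRun, m, Nat.unpair_pair] at htrans
    rw [← htrans]
    exact hconc (n + m) hkm (hρlen _ (by omega))

end LTSC

theorem bjustness_feasible_general {S Tr L : Type} (lts : LTSC S Tr L) (B : Set L)
    (hcount : ∀ s : S,
      {t : Tr | t ∈ lts.toLTS.TrB ∧ lts.label t ∉ B ∧ lts.source t = s}.Countable)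
    (π : lts.toLTS.Path) (n : ℕ) (hfin : π.len = (n : ℕ∞)) :
    ∃ ρ : lts.toLTS.Path, ρ.Extends π ∧ lts.BJust B ρ := by
  classical
  choose e he using fun s => Set.countable_iff_exists_subset_range.mp ((hcount s).image some)
  have hext m : (lts.justRun B e π n m).Extends π :=
    LTS.Path.extends_of_le (lts.justRun_extends_succ B e) m.zero_le
  by_cases hstuck : ∃ m, lts.enabled B ((lts.justRun B e π n m).states (n + m)) = ∅
  · have hlen := lts.justRun_len B e hfin fun m' hm' =>
      Set.nonempty_iff_ne_empty.2 (Nat.find_min hstuck hm')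
    exact ⟨_, hext _, lts.bJust_of_enabled_eq_empty B hlen (Nat.find_spec hstuck)⟩
  · push Not at hstuck
    have hlen (m : ℕ) : (m : ℕ∞) ≤ (lts.justRun B e π n m).len := by
      rw [lts.justRun_len B e hfin fun m' _ => hstuck m']
      exact Nat.cast_le.2 (Nat.le_add_left m n)
    let ρ := LTS.Path.limit _ (lts.justRun_extends_succ B e) hlen
    exact ⟨ρ, (LTS.Path.limit_extends _ _ _ 0).trans (hext 0),
      lts.bJust_of_forall_extends_justRun B e hfin hstuck he (LTS.Path.limit_extends _ _ _)⟩

/-- Theorem 1 (feasibility of justness): if in each state only countably many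
non-blocking transitions (from `Tr•_{¬B}`) are enabled, then every finite path can be
extended into a `B`-just path. -/
theorem bjustness_feasible {S Tr L : Type} (lts : LTSC S Tr L) (B : Set L)
    (hRecB : lts.Rec ⊆ B) (hBAct : B ⊆ lts.Act)
    (hcount : ∀ s : S,
      {t : Tr | t ∈ lts.toLTS.TrB ∧ lts.label t ∉ B ∧ lts.source t = s}.Countable)
    (π : lts.toLTS.Path) (n : ℕ) (hfin : π.len = (n : ℕ∞)) :
    ∃ ρ : lts.toLTS.Path, ρ.Extends π ∧ lts.BJust B ρ :=
  bjustness_feasible_general lts B hcount π n hfin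
end

section
/- Call two transitions t,t′ ∈ Tr• equivalent if t ⌣• u ⇔ t′ ⌣• u for all u ∈ Tr•, and call an equivalence class enabled in a state if one of its elements has that state as source. In any labelled transition system with concurrency, if in each state only countably many equivalence classes of transitions from Tr•_{¬B} are enabled, then B-justness is feasible: every finite path can be extended into a B-just path. -/
section Scheduler

variable {S Tr L : Type}

/-- The `⌣•`-class of a transition, as the set of transitions of `Tr•` concurrent with it. -/
def LTSC.classOf (lts : LTSC S Tr L) (t : Tr) : Set Tr :=
  {u ∈ lts.toLTS.TrB | lts.conc t u}

/-- The condition under which the scheduler extends the current partial path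
`p = (length, states, transitions)` at stage `j`.  Stage `j` is decoded into a position
`k` and a class index `c`; the condition asks for a member `t` of the class
`enum (p.2.1 k) c` (taken from `Tr•_{¬B}` and enabled at position `k`) that is
concurrent with every transition of the path from position `k` onwards (a "live"
member), together with a transition `u` enabled at the current end of the path that
has the same label as `t` and is not concurrent with `t`. -/
def LTSC.Cond (lts : LTSC S Tr L) (B : Set L) (enum : S → ℕ → Set Tr)
    (j : ℕ) (p : ℕ × (ℕ → S) × (ℕ → Tr)) : Prop :=
  ∃ t u : Tr,
    (t ∈ lts.toLTS.TrB ∧ lts.label t ∉ B ∧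
      lts.source t = p.2.1 (Nat.unpair (Nat.unpair j).1).1 ∧
      lts.classOf t = enum (p.2.1 (Nat.unpair (Nat.unpair j).1).1)
        (Nat.unpair (Nat.unpair j).1).2 ∧
      ∀ i : ℕ, (Nat.unpair (Nat.unpair j).1).1 ≤ i → i < p.1 → lts.conc t (p.2.2 i)) ∧
    (u ∈ lts.toLTS.TrB ∧ lts.source u = p.2.1 p.1 ∧
      lts.label u = lts.label t ∧ ¬ lts.conc t u)

open scoped Classical in
/-- One scheduler step: if the condition holds, append the chosen transition `u`. -/
noncomputable def LTSC.serveStep (lts : LTSC S Tr L) (B : Set L)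
    (enum : S → ℕ → Set Tr) (j : ℕ) (p : ℕ × (ℕ → S) × (ℕ → Tr)) :
    ℕ × (ℕ → S) × (ℕ → Tr) :=
  if h : lts.Cond B enum j p then
    (p.1 + 1,
      fun i => if i = p.1 + 1 then lts.target h.choose_spec.choose else p.2.1 i,
      fun i => if i = p.1 then h.choose_spec.choose else p.2.2 i)
  else p

/-- The successive partial paths produced by the scheduler, starting from `π` (length `n`). -/
noncomputable def LTSC.stages (lts : LTSC S Tr L) (B : Set L)
    (enum : S → ℕ → Set Tr) (π : lts.toLTS.Path) (n : ℕ) :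
    ℕ → ℕ × (ℕ → S) × (ℕ → Tr)
  | 0 => (n, π.states, π.trans)
  | j + 1 => lts.serveStep B enum j (lts.stages B enum π n j)

end Scheduler

/-- Two transitions `t, t'` of `Tr•` are equivalent iff `t ⌣• u ⇔ t' ⌣• u` for all
`u ∈ Tr•`; hence the equivalence class of `t` is determined by the set
`{u ∈ Tr• | t ⌣• u}`.  The class of `t` is enabled in `s` if some member has source `s`.

Corollary 1: if in each state only countably many equivalence classes of transitions from
`Tr•_{¬B}` are enabled — formalised as countability of the image, under
`t ↦ {u ∈ Tr• | t ⌣• u}`, of the set of transitions of `Tr•_{¬B}` enabled in that state —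
then every finite path can be extended into a `B`-just path. -/
theorem bjustness_feasible_classes {S Tr L : Type} (lts : LTSC S Tr L) (B : Set L)
    (hRecB : lts.Rec ⊆ B) (hBAct : B ⊆ lts.Act)
    (hcount : ∀ s : S,
      ((fun t => {u ∈ lts.toLTS.TrB | lts.conc t u}) ''
        {t : Tr | t ∈ lts.toLTS.TrB ∧ lts.label t ∉ B ∧ lts.source t = s}).Countable)
    (π : lts.toLTS.Path) (n : ℕ) (hfin : π.len = (n : ℕ∞)) :
    ∃ ρ : lts.toLTS.Path, ρ.Extends π ∧ lts.BJust B ρ := by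
  classical
  -- choose an enumeration of the classes enabled in each state
  have henum : ∀ s : S, ∃ f : ℕ → Set Tr,
      ∀ C ∈ ((fun t => {u ∈ lts.toLTS.TrB | lts.conc t u}) ''
        {t : Tr | t ∈ lts.toLTS.TrB ∧ lts.label t ∉ B ∧ lts.source t = s}),
        ∃ c : ℕ, f c = C := by
    intro s
    by_cases hne : ((fun t => {u ∈ lts.toLTS.TrB | lts.conc t u}) ''
        {t : Tr | t ∈ lts.toLTS.TrB ∧ lts.label t ∉ B ∧ lts.source t = s}).Nonempty
    · obtain ⟨f, hf⟩ := (hcount s).exists_eq_range hne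
      refine ⟨f, fun C hC => ?_⟩
      rw [hf] at hC
      obtain ⟨c, hc⟩ := hC
      exact ⟨c, hc⟩
    · exact ⟨fun _ => (∅ : Set Tr), fun C hC => absurd ⟨C, hC⟩ hne⟩
  choose enum enum_spec using henum
  set G := lts.stages B enum π n with hGdef
  have hG0 : G 0 = (n, π.states, π.trans) := rfl
  -- characterisation of one step of the construction
  have hstep : ∀ j : ℕ,
      (¬ lts.Cond B enum j (G j) ∧ G (j + 1) = G j) ∨
      ∃ t u : Tr,
        (t ∈ lts.toLTS.TrB ∧ lts.label t ∉ B ∧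
          lts.source t = (G j).2.1 (Nat.unpair (Nat.unpair j).1).1 ∧
          lts.classOf t = enum ((G j).2.1 (Nat.unpair (Nat.unpair j).1).1)
            (Nat.unpair (Nat.unpair j).1).2 ∧
          ∀ i : ℕ, (Nat.unpair (Nat.unpair j).1).1 ≤ i → i < (G j).1 →
            lts.conc t ((G j).2.2 i)) ∧
        (u ∈ lts.toLTS.TrB ∧ lts.source u = (G j).2.1 (G j).1 ∧
          lts.label u = lts.label t ∧ ¬ lts.conc t u) ∧
        (G (j + 1)).1 = (G j).1 + 1 ∧
        (∀ i : ℕ, i ≠ (G j).1 + 1 → (G (j + 1)).2.1 i = (G j).2.1 i) ∧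
        (G (j + 1)).2.1 ((G j).1 + 1) = lts.target u ∧
        (∀ i : ℕ, i ≠ (G j).1 → (G (j + 1)).2.2 i = (G j).2.2 i) ∧
        (G (j + 1)).2.2 (G j).1 = u := by
    intro j
    have hGj : G (j + 1) = lts.serveStep B enum j (G j) := rfl
    by_cases h : lts.Cond B enum j (G j)
    · right
      unfold LTSC.serveStep at hGj
      rw [dif_pos h] at hGj
      obtain ⟨ht, hu⟩ := h.choose_spec.choose_spec
      exact ⟨h.choose, h.choose_spec.choose, ht, hu,
        by rw [hGj],
        fun i hi => by rw [hGj]; exact if_neg hi,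
        by rw [hGj]; exact if_pos rfl,
        fun i hi => by rw [hGj]; exact if_neg hi,
        by rw [hGj]; exact if_pos rfl⟩
    · left
      refine ⟨h, ?_⟩
      unfold LTSC.serveStep at hGj
      rw [dif_neg h] at hGj
      exact hGj
  -- monotonicity of the lengths
  have hmono1 : ∀ j : ℕ, (G j).1 ≤ (G (j + 1)).1 := by
    intro j
    rcases hstep j with ⟨_, heq⟩ | ⟨t, u, _, _, h1, _⟩
    · rw [heq]
    · omega
  have hmono : ∀ j j' : ℕ, j ≤ j' → (G j).1 ≤ (G j').1 :=
    fun j j' h => monotone_nat_of_le_succ hmono1 h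
  -- stabilisation of states and transitions
  have hstab_st : ∀ j i : ℕ, i ≤ (G j).1 → ∀ j' : ℕ, j ≤ j' →
      (G j').2.1 i = (G j).2.1 i := by
    intro j i hij j' hjj'
    induction j', hjj' using Nat.le_induction with
    | base => rfl
    | succ j' hjj' ih =>
      rcases hstep j' with ⟨_, heq⟩ | ⟨t, u, _, _, h1, h2, _, _, _⟩
      · rw [heq, ih]
      · rw [h2 i (by have := hmono j j' hjj'; omega), ih]
  have hstab_tr : ∀ j i : ℕ, i < (G j).1 → ∀ j' : ℕ, j ≤ j' →
      (G j').2.2 i = (G j).2.2 i := by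
    intro j i hij j' hjj'
    induction j', hjj' using Nat.le_induction with
    | base => rfl
    | succ j' hjj' ih =>
      rcases hstep j' with ⟨_, heq⟩ | ⟨t, u, _, _, h1, h2, _, h4, _⟩
      · rw [heq, ih]
      · rw [h4 i (by have := hmono j j' hjj'; omega), ih]
  -- the invariant: each stage is a valid partial path extending π
  have hInv : ∀ j : ℕ, n ≤ (G j).1 ∧
      (∀ i : ℕ, i ≤ n → (G j).2.1 i = π.states i) ∧
      (∀ i : ℕ, i < n → (G j).2.2 i = π.trans i) ∧
      (∀ i : ℕ, i < (G j).1 →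
        lts.source ((G j).2.2 i) = (G j).2.1 i ∧
        lts.target ((G j).2.2 i) = (G j).2.1 (i + 1) ∧
        lts.label ((G j).2.2 i) ∈ lts.Act) := by
    intro j
    induction j with
    | zero =>
      refine ⟨le_refl n, fun i _ => rfl, fun i _ => rfl, fun i hi => ?_⟩
      have hi' : (i : ℕ∞) < π.len := by rw [hfin]; exact_mod_cast hi
      exact ⟨π.src_eq i hi', π.tgt_eq i hi', π.lab_act i hi'⟩
    | succ j ih =>
      obtain ⟨ih1, ih2, ih3, ih4⟩ := ih
      rcases hstep j with ⟨_, heq⟩ | ⟨t, u, ht, hu, h1, h2, h3, h4, h5⟩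
      · rw [heq]; exact ⟨ih1, ih2, ih3, ih4⟩
      · refine ⟨by omega, ?_, ?_, ?_⟩
        · intro i hi; rw [h2 i (by omega), ih2 i hi]
        · intro i hi; rw [h4 i (by omega), ih3 i hi]
        · intro i hi
          rw [h1] at hi
          rcases Nat.lt_succ_iff_lt_or_eq.mp hi with hlt | heq
          · rw [h4 i (by omega), h2 i (by omega), h2 (i + 1) (by omega)]
            exact ih4 i hlt
          · subst heq
            rw [h5, h2 ((G j).1) (by omega), h3]
            exact ⟨hu.2.1, rfl, hu.1.1⟩
  -- the limit path
  set ρlen : ℕ∞ := ⨆ j : ℕ, ((G j).1 : ℕ∞) with hρlen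
  set ρst : ℕ → S := fun i =>
    if h : ∃ j : ℕ, i ≤ (G j).1 then (G (Nat.find h)).2.1 i else π.states 0 with hρst
  set ρtr : ℕ → Tr := fun i =>
    if h : ∃ j : ℕ, i < (G j).1 then (G (Nat.find h)).2.2 i else π.trans 0 with hρtr
  have hρst_eq : ∀ j i : ℕ, i ≤ (G j).1 → ρst i = (G j).2.1 i := by
    intro j i hij
    have hex : ∃ j : ℕ, i ≤ (G j).1 := ⟨j, hij⟩
    have e1 := hstab_st (Nat.find hex) i (Nat.find_spec hex)
      (max (Nat.find hex) j) (le_max_left _ _)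
    have e2 := hstab_st j i hij (max (Nat.find hex) j) (le_max_right _ _)
    simp only [hρst]
    rw [dif_pos hex, ← e1, e2]
  have hρtr_eq : ∀ j i : ℕ, i < (G j).1 → ρtr i = (G j).2.2 i := by
    intro j i hij
    have hex : ∃ j : ℕ, i < (G j).1 := ⟨j, hij⟩
    have e1 := hstab_tr (Nat.find hex) i (Nat.find_spec hex)
      (max (Nat.find hex) j) (le_max_left _ _)
    have e2 := hstab_tr j i hij (max (Nat.find hex) j) (le_max_right _ _)
    simp only [hρtr]
    rw [dif_pos hex, ← e1, e2]
  have hlt_len : ∀ i j : ℕ, i < (G j).1 → (i : ℕ∞) < ρlen := by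
    intro i j h
    exact lt_of_lt_of_le (by exact_mod_cast h) (le_iSup (fun j => ((G j).1 : ℕ∞)) j)
  have hlt_len_ex : ∀ i : ℕ, (i : ℕ∞) < ρlen → ∃ j : ℕ, i < (G j).1 := by
    intro i hi
    by_contra hno
    push_neg at hno
    have hle : ρlen ≤ (i : ℕ∞) := iSup_le (fun j => by exact_mod_cast hno j)
    exact absurd hi (not_lt.mpr hle)
  have hle_len_ex : ∀ k : ℕ, (k : ℕ∞) ≤ ρlen → ∃ j : ℕ, k ≤ (G j).1 := by
    intro k hk
    rcases Nat.eq_zero_or_pos k with h0 | hpos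
    · exact ⟨0, by omega⟩
    · have hlt : ((k - 1 : ℕ) : ℕ∞) < ρlen :=
        lt_of_lt_of_le (lt_of_lt_of_le (by exact_mod_cast Nat.sub_lt hpos one_pos) hk)
          (le_refl _)
      obtain ⟨j, hj⟩ := hlt_len_ex _ hlt
      exact ⟨j, by omega⟩
  -- validity of the limit path
  have hsrc_eq : ∀ i : ℕ, (i : ℕ∞) < ρlen → lts.source (ρtr i) = ρst i := by
    intro i hi
    obtain ⟨j, hj⟩ := hlt_len_ex i hi
    rw [hρtr_eq j i hj, hρst_eq j i hj.le]
    exact ((hInv j).2.2.2 i hj).1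
  have htgt_eq : ∀ i : ℕ, (i : ℕ∞) < ρlen → lts.target (ρtr i) = ρst (i + 1) := by
    intro i hi
    obtain ⟨j, hj⟩ := hlt_len_ex i hi
    rw [hρtr_eq j i hj, hρst_eq j (i + 1) (by omega)]
    exact ((hInv j).2.2.2 i hj).2.1
  have hlab_act : ∀ i : ℕ, (i : ℕ∞) < ρlen → lts.label (ρtr i) ∈ lts.Act := by
    intro i hi
    obtain ⟨j, hj⟩ := hlt_len_ex i hi
    rw [hρtr_eq j i hj]
    exact ((hInv j).2.2.2 i hj).2.2
  refine ⟨⟨ρlen, ρst, ρtr, hsrc_eq, htgt_eq, hlab_act⟩, ⟨?_, ?_, ?_⟩, ?_⟩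
  · -- length
    show π.len ≤ ρlen
    rw [hfin]
    have h0 : ((G 0).1 : ℕ∞) ≤ ρlen := le_iSup (fun j => ((G j).1 : ℕ∞)) 0
    rw [hG0] at h0
    exact h0
  · -- states agree with π
    intro i hi
    show ρst i = π.states i
    rw [hfin] at hi
    have hin : i ≤ n := by exact_mod_cast hi
    have : (G 0).2.1 i = π.states i := rfl
    rw [hρst_eq 0 i (by rw [hG0]; exact hin), this]
  · -- transitions agree with π
    intro i hi
    show ρtr i = π.trans i
    rw [hfin] at hi
    have hin : i < n := by exact_mod_cast hi
    have : (G 0).2.2 i = π.trans i := rfl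
    rw [hρtr_eq 0 i (by rw [hG0]; exact hin), this]
  · -- B-justness
    intro k hk t ht htB hsrc
    dsimp only at hk hsrc ⊢
    obtain ⟨j₀, hj₀⟩ := hle_len_ex k hk
    have hCmem : lts.classOf t ∈ ((fun t => {u ∈ lts.toLTS.TrB | lts.conc t u}) ''
        {t' : Tr | t' ∈ lts.toLTS.TrB ∧ lts.label t' ∉ B ∧ lts.source t' = ρst k}) :=
      ⟨t, ⟨ht, htB, hsrc⟩, rfl⟩
    obtain ⟨c, hc⟩ := enum_spec (ρst k) _ hCmem
    set j := Nat.pair (Nat.pair k c) j₀ with hj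
    have hdec1 : (Nat.unpair (Nat.unpair j).1).1 = k := by
      rw [hj, Nat.unpair_pair]; simp [Nat.unpair_pair]
    have hdec2 : (Nat.unpair (Nat.unpair j).1).2 = c := by
      rw [hj, Nat.unpair_pair]; simp [Nat.unpair_pair]
    have hj₀j : j₀ ≤ j := Nat.right_le_pair _ _
    have hkM : k ≤ (G j).1 := le_trans hj₀ (hmono j₀ j hj₀j)
    have hstk : ρst k = (G j).2.1 k := hρst_eq j k hkM
    rcases hstep j with ⟨hncond, _⟩ | ⟨t₀, u, ht₀, hu, h1, h2, h3, h4, h5⟩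
    · -- nothing was appended at stage j, so t cannot be live: a past witness exists
      by_contra hno
      push_neg at hno
      apply hncond
      have hlive : ∀ i : ℕ, k ≤ i → i < (G j).1 → lts.conc t ((G j).2.2 i) := by
        intro i hki hiM
        have := hno i hki (hlt_len i j hiM)
        rwa [hρtr_eq j i hiM] at this
      obtain ⟨u, huB, husrc, hulab, hunconc⟩ :=
        lts.conc_closure t ht
          { len := (((G j).1 - k : ℕ) : ℕ∞)
            states := fun i => (G j).2.1 (k + i)
            trans := fun i => (G j).2.2 (k + i)
            src_eq := fun i hi => by
              have hi' : k + i < (G j).1 := by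
                have := Nat.cast_lt.mp hi; omega
              exact ((hInv j).2.2.2 _ hi').1
            tgt_eq := fun i hi => by
              have hi' : k + i < (G j).1 := by
                have := Nat.cast_lt.mp hi; omega
              exact ((hInv j).2.2.2 _ hi').2.1
            lab_act := fun i hi => by
              have hi' : k + i < (G j).1 := by
                have := Nat.cast_lt.mp hi; omega
              exact ((hInv j).2.2.2 _ hi').2.2 }
          ((G j).1 - k) rfl
          (by
            show (G j).2.1 (k + 0) = lts.source t
            rw [Nat.add_zero, ← hstk, hsrc])
          (by
            intro i hi
            show lts.conc t ((G j).2.2 (k + i))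
            exact hlive (k + i) (by omega) (by omega))
      refine ⟨t, u, ⟨ht, htB, ?_, ?_, ?_⟩, huB, ?_, hulab, hunconc⟩
      · rw [hdec1, ← hstk]; exact hsrc
      · rw [hdec1, hdec2, ← hstk]; exact hc.symm
      · intro i hi1 hi2; rw [hdec1] at hi1; exact hlive i hi1 hi2
      · rw [husrc]
        have harith : k + ((G j).1 - k) = (G j).1 := by omega
        show (G j).2.1 (k + ((G j).1 - k)) = (G j).2.1 ((G j).1)
        rw [harith]
    · -- a transition was appended at stage j; it serves the whole class of t
      refine ⟨(G j).1, hkM, hlt_len _ (j + 1) (by omega), ?_⟩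
      rw [hρtr_eq (j + 1) _ (by omega), h5]
      intro hconc
      rw [hdec1, hdec2] at ht₀
      have hclass : lts.classOf t₀ = lts.classOf t := by
        rw [ht₀.2.2.2.1, ← hstk, hc]
      have humem : u ∈ lts.classOf t := ⟨hu.1, hconc⟩
      rw [← hclass] at humem
      exact hu.2.2.2 humem.2
end

section
/- Let Tk := {T_t | t ∈ Tr•} where T_t := {u ∈ Tr° | ¬(t ⌣• u)}. Then for any B with Rec ⊆ B ⊆ Act, every path that is strongly B-fair, and every path that is weakly B-fair, with respect to this set of tasks, is B-just. -/
/-- `Tr°`: the transitions whose label is an action. -/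
def LTS.TrC {S Tr L : Type} (lts : LTS S Tr L) : Set Tr :=
  {t | lts.label t ∈ lts.Act}

/-- The set of tasks `Tk := {T_t | t ∈ Tr•}` with `T_t := {u ∈ Tr° | ¬ t ⌣• u}`. -/
def LTSC.Tk {S Tr L : Type} (lts : LTSC S Tr L) : Set (Set Tr) :=
  {T | ∃ t ∈ lts.toLTS.TrB, T = {u ∈ lts.toLTS.TrC | ¬ lts.conc t u}}

/-- A task `T` is `B`-enabled in a state `s` if some non-blocking `t ∈ T`
(`ℓ(t) ∉ B`, `ℓ(t) ∉ Rec`) has source `s`. -/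
def LTSC.BEnabled {S Tr L : Type} (lts : LTSC S Tr L) (B : Set L)
    (T : Set Tr) (s : S) : Prop :=
  ∃ t ∈ T, lts.label t ∉ B ∧ lts.label t ∉ lts.Rec ∧ lts.source t = s

/-- A path is strongly `B`-fair w.r.t. a collection `Tk` of tasks if for every suffix
(starting at `k`), each task relentlessly `B`-enabled on that suffix occurs in it. -/
def LTSC.StronglyFair {S Tr L : Type} (lts : LTSC S Tr L) (Tk : Set (Set Tr))
    (B : Set L) (π : lts.toLTS.Path) : Prop :=
  ∀ k : ℕ, (k : ℕ∞) ≤ π.len → ∀ T ∈ Tk,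
    (∀ k' : ℕ, k ≤ k' → (k' : ℕ∞) ≤ π.len →
      ∃ j : ℕ, k' ≤ j ∧ (j : ℕ∞) ≤ π.len ∧ lts.BEnabled B T (π.states j)) →
    ∃ i : ℕ, k ≤ i ∧ (i : ℕ∞) < π.len ∧ π.trans i ∈ T

/-- A path is weakly `B`-fair w.r.t. a collection `Tk` of tasks if for every suffix
(starting at `k`), each task perpetually `B`-enabled on that suffix occurs in it. -/
def LTSC.WeaklyFair {S Tr L : Type} (lts : LTSC S Tr L) (Tk : Set (Set Tr))
    (B : Set L) (π : lts.toLTS.Path) : Prop :=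
  ∀ k : ℕ, (k : ℕ∞) ≤ π.len → ∀ T ∈ Tk,
    (∀ j : ℕ, k ≤ j → (j : ℕ∞) ≤ π.len → lts.BEnabled B T (π.states j)) →
    ∃ i : ℕ, k ≤ i ∧ (i : ℕ∞) < π.len ∧ π.trans i ∈ T

private lemma weak_just {S Tr L : Type} (lts : LTSC S Tr L) (B : Set L)
    (hRecB : lts.Rec ⊆ B) (π : lts.toLTS.Path)
    (hw : lts.WeaklyFair lts.Tk B π) : lts.BJust B π := by
  intro k hk t ht htB hsrc
  by_contra hcon
  push_neg at hcon
  set T : Set Tr := {u ∈ lts.toLTS.TrC | ¬ lts.conc t u} with hT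
  have hTk : T ∈ lts.Tk := ⟨t, ht, rfl⟩
  have henb : ∀ j : ℕ, k ≤ j → (j : ℕ∞) ≤ π.len → lts.BEnabled B T (π.states j) := by
    intro j hkj hj
    -- build the segment path from k to j
    have hlt : ∀ i : ℕ, i < j - k → (↑(k + i) : ℕ∞) < π.len := by
      intro i hi
      have h1 : k + i < j := by omega
      calc (↑(k + i) : ℕ∞) < (j : ℕ∞) := by exact_mod_cast h1
        _ ≤ π.len := hj
    let σ : lts.toLTS.Path :=
      { len := ((j - k : ℕ) : ℕ∞)
        states := fun i => π.states (k + i)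
        trans := fun i => π.trans (k + i)
        src_eq := fun i hi => π.src_eq (k + i) (hlt i (by exact_mod_cast hi))
        tgt_eq := fun i hi => by
          have := π.tgt_eq (k + i) (hlt i (by exact_mod_cast hi))
          simpa [Nat.add_assoc] using this
        lab_act := fun i hi => π.lab_act (k + i) (hlt i (by exact_mod_cast hi)) }
    have hst0 : σ.states 0 = lts.source t := by
      show π.states (k + 0) = lts.source t
      rw [Nat.add_zero, hsrc]
    obtain ⟨u, hu, husrc, hulab, hunc⟩ :=
      lts.conc_closure t ht σ (j - k) rfl hst0 (by
        intro i hi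
        exact hcon (k + i) (by omega) (hlt i hi))
    refine ⟨u, ⟨hu.1, hunc⟩, ?_, ?_, ?_⟩
    · rw [hulab]; exact htB
    · rw [hulab]; exact fun h => htB (hRecB h)
    · have : σ.states (j - k) = π.states j := by
        show π.states (k + (j - k)) = π.states j
        congr 1; omega
      rw [husrc, this]
  obtain ⟨i, hki, hilen, hiT⟩ := hw k hk T hTk henb
  exact hiT.2 (hcon i hki hilen)

/-- Proposition 1: w.r.t. the set of tasks `Tk := {T_t | t ∈ Tr•}`, every strongly
`B`-fair path and every weakly `B`-fair path is `B`-just. -/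
theorem fair_implies_just {S Tr L : Type} (lts : LTSC S Tr L) (B : Set L)
    (hRecB : lts.Rec ⊆ B) (hBAct : B ⊆ lts.Act) (π : lts.toLTS.Path) :
    (lts.StronglyFair lts.Tk B π → lts.BJust B π) ∧
    (lts.WeaklyFair lts.Tk B π → lts.BJust B π) := by
  have hsw : lts.StronglyFair lts.Tk B π → lts.WeaklyFair lts.Tk B π := by
    intro hs k hk T hT henb
    exact hs k hk T hT fun k' hkk' hk' => ⟨k', le_refl k', hk', henb k' hkk' hk'⟩
  exact ⟨fun hs => weak_just lts B hRecB π (hsw hs),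
         fun hw => weak_just lts B hRecB π hw⟩
end

section
/- Let T be a set of derivations equipped with source and label maps extending those of the transitions Tr of an LTS, let Tr• ⊆ T, and let ⤳ ⊆ T×T and ⌣• ⊆ T×Tr satisfy: (A) ⤳ is reflexive and transitive; (B) if t ⤳ t′ and t ⌣• v then t′ ⌣• v; (C) if χ ∈ T, v ∈ Tr, χ ⌣• v and source(χ)=source(v), then there exists χ′ ∈ T with source(χ′)=target(v) and χ ⤳ χ′; (D) if χ ⤳ χ′ then ℓ(χ′)=ℓ(χ), and moreover if χ ∈ Tr• then ¬(χ ⌣• χ′). Then: if χ ∈ Tr• and π is a path from source(χ) to a state P such that χ ⌣• v for all transitions v occurring in π, there exists χ′ ∈ Tr• with source(χ′)=P, ℓ(χ′)=ℓ(χ) and ¬(χ ⌣• χ′). -/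
/-- Corollary 2: given a set `T` of "derivations" (a subset of a type `D`, also containing
the transitions `Tr` of an LTS and a subset `Tr• ⊆ T`), with source/target/label maps,
a relation `⤳` (`lead`) on `T` and a relation `⌣•` (`conc`) on `T × Tr`, satisfying
(A) `⤳` is reflexive and transitive; (B) `t ⤳ t'` and `t ⌣• v` imply `t' ⌣• v`;
(C) if `χ ∈ T`, `v ∈ Tr`, `χ ⌣• v` and `source χ = source v`, then some `χ' ∈ T` has
`source χ' = target v` and `χ ⤳ χ'`; (D) `χ ⤳ χ'` implies `ℓ(χ') = ℓ(χ)`, and moreover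
`¬ χ ⌣• χ'` in case `χ ∈ Tr•`; where membership of `Tr•` is determined by the label —
then: whenever `χ ∈ Tr•` and `π` is a (finite) path from `source χ` to a state `P` all
of whose transitions `v` satisfy `χ ⌣• v`, there exists `χ' ∈ Tr•` with
`source χ' = P`, `ℓ(χ') = ℓ(χ)` and `¬ χ ⌣• χ'`. -/
theorem closure_property {S L D : Type}
    (Tr T TrB : Set D) (hTrBT : TrB ⊆ T)
    (source target : D → S) (label : D → L)
    (lead : D → D → Prop) (conc : D → D → Prop)
    (hrefl : ∀ t ∈ T, lead t t)
    (htrans : ∀ t u v, t ∈ T → u ∈ T → v ∈ T → lead t u → lead u v → lead t v)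
    (hB : ∀ t t' v, t ∈ T → t' ∈ T → v ∈ Tr → lead t t' → conc t v → conc t' v)
    (hC : ∀ χ v, χ ∈ T → v ∈ Tr → conc χ v → source χ = source v →
      ∃ χ' ∈ T, source χ' = target v ∧ lead χ χ')
    (hD : ∀ χ χ', χ ∈ T → χ' ∈ T → lead χ χ' →
      label χ' = label χ ∧ (χ ∈ TrB → ¬ conc χ χ'))
    (hlab : ∀ χ χ', label χ' = label χ → χ ∈ TrB → χ' ∈ TrB)
    -- a finite path `states 0, trans 0, states 1, …, trans (n-1), states n`
    (n : ℕ) (states : ℕ → S) (trans : ℕ → D)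
    (htr : ∀ i < n, trans i ∈ Tr)
    (hsrc : ∀ i < n, source (trans i) = states i)
    (htgt : ∀ i < n, target (trans i) = states (i + 1))
    (χ : D) (hχ : χ ∈ TrB) (hstart : states 0 = source χ)
    (hconc : ∀ i < n, conc χ (trans i)) :
    ∃ χ' ∈ TrB, source χ' = states n ∧ label χ' = label χ ∧ ¬ conc χ χ' := by
  have key : ∀ i ≤ n, ∃ χ' ∈ T, source χ' = states i ∧ lead χ χ' := by
    intro i hi
    induction i with
    | zero => exact ⟨χ, hTrBT hχ, hstart.symm, hrefl χ (hTrBT hχ)⟩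
    | succ k ih =>
      obtain ⟨χ', hχ'T, hs, hl⟩ := ih (Nat.le_of_succ_le hi)
      have hk : k < n := hi
      have hcc : conc χ' (trans k) := hB χ χ' (trans k) (hTrBT hχ) hχ'T (htr k hk) hl (hconc k hk)
      obtain ⟨χ'', hχ''T, hs'', hl''⟩ := hC χ' (trans k) hχ'T (htr k hk) hcc (hs.trans (hsrc k hk).symm)
      exact ⟨χ'', hχ''T, hs''.trans (htgt k hk), htrans χ χ' χ'' (hTrBT hχ) hχ'T hχ''T hl hl''⟩
  obtain ⟨χ', hχ'T, hs, hl⟩ := key n le_rfl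
  obtain ⟨hlabel, hnc⟩ := hD χ χ' (hTrBT hχ) hχ'T hl
  exact ⟨χ', hlab χ χ' hlabel hχ, hs, hlabel, hnc hχ⟩
end
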